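/- arXiv:1305.0450 — 3 statements merged into one kernel-verified Lean document; each statement's English description precedes it below -/
import Mathlib

section
/- In the endomorphism algebra of V ⊗ K_λ ⊗ V* over gl(m|n), the Casimir operators satisfy (x_1 + x̄_1) e_1 = 0 and e_1 (x_1 + x̄_1) = 0, where x_1, x̄_1, e_1 are the operators given by the Casimir element Ω acting on tensor positions (V, K_λ), (K_λ, V*), (V, V*) respectively. -/
/-!
In a product of two of the operators the matrix units on `V` and `V*` contract,
`E_{ab} E_{cd} = δ_{bc} E_{ad}`, so the product is a triple sum. All signs depend only on
parities, and the parity operator of `K` commutes with `E_{ab}` up to the sign `(-1)^{[a]+[b]}`.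
Once the signs are evaluated, `x₁ e₁` and `x̄₁ e₁` are the same triple sum with opposite signs
(after exchanging two summation indices), and likewise `e₁ x₁` and `e₁ x̄₁`.
-/

open TensorProduct

theorem Finset.sum_sum_mul_sum_sum_of_mul_eq_ite {ι A : Type*} [Fintype ι] [DecidableEq ι]
    [NonUnitalNonAssocSemiring A] (f g : ι → ι → A) (h : ι → ι → ι → A)
    (hfg : ∀ a b c d, f a b * g c d = if b = c then h a b d else 0) :
    (∑ a, ∑ b, f a b) * ∑ c, ∑ d, g c d = ∑ a, ∑ b, ∑ d, h a b d := by
  simp only [Finset.sum_mul]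
  refine Finset.sum_congr rfl fun a _ => Finset.sum_congr rfl fun b _ => ?_
  simp only [Finset.mul_sum, hfg, Finset.sum_ite_irrel, Finset.sum_const_zero, Finset.sum_ite_eq,
    Finset.mem_univ, if_true]

theorem pow_mul_eq_smul_mul_pow {R A : Type*} [CommSemiring R] [Semiring A] [Algebra R A]
    {P X : A} {c : R} (h : P * X = c • (X * P)) (s : ℕ) :
    P ^ s * X = c ^ s • (X * P ^ s) := by
  induction s with
  | zero => simp
  | succ s ih =>
    rw [pow_succ, mul_assoc, h, mul_smul_comm, ← mul_assoc, ih, smul_mul_assoc, smul_smul,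
      mul_assoc, ← pow_succ', pow_succ]

theorem TensorProduct.map_map_mul_map_map {R A B C : Type*} [CommSemiring R]
    [AddCommMonoid A] [AddCommMonoid B] [AddCommMonoid C] [Module R A] [Module R B] [Module R C]
    (f f' : Module.End R A) (g g' : Module.End R B) (h h' : Module.End R C) :
    map f (map g h) * map f' (map g' h') = map (f * f') (map (g * g') (h * h')) := by
  simp only [Module.End.mul_eq_comp, map_comp]

theorem Matrix.toLin'_single_one_mul_toLin'_single_one {R ι : Type*} [CommSemiring R] [Fintype ι]
    [DecidableEq ι] (a b c d : ι) :
    (toLin' (single a b (1 : R)) : Module.End R (ι → R)) * toLin' (single c d 1)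
      = if b = c then toLin' (single a d 1) else 0 := by
  rw [Module.End.mul_eq_comp, ← toLin'_mul]
  split_ifs with h
  · rw [h, single_mul_single_same, one_mul]
  · rw [single_mul_single_of_ne (h := h), map_zero]

theorem Matrix.toLin'_single_one_mul_toLin'_diagonal_pow {R ι : Type*} [CommSemiring R]
    [Fintype ι] [DecidableEq ι] (f : ι → R) (a b : ι) (s : ℕ) :
    (toLin' (single a b (1 : R)) : Module.End R (ι → R)) * toLin' (diagonal f) ^ s
      = f b ^ s • toLin' (single a b 1) := by
  rw [← toLin'_pow, Module.End.mul_eq_comp, ← toLin'_mul, diagonal_pow, ← map_smul]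
  congr 1
  ext i j
  by_cases hj : b = j <;> simp [mul_diagonal, single_apply, hj]

theorem pow_add_mul_pow_add_of_mul_self_eq_one {M : Type*} [Monoid M] {P : M} (hP : P * P = 1)
    (x y z : ℕ) : P ^ (x + y) * P ^ (y + z) = P ^ (x + z) := by
  rw [← pow_add, show x + y + (y + z) = x + z + 2 * y by ring, pow_add, pow_mul, sq, hP, one_pow,
    mul_one]

theorem neg_one_pow_smul_congr {R M : Type*} [Monoid R] [HasDistribNeg R] [MulAction R M]
    {m n : ℕ} (h : Even m ↔ Even n) (x : M) : (-1 : R) ^ m • x = (-1 : R) ^ n • x := by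
  rw [neg_one_pow_congr h]

section Casimir

open Matrix (toLin' single diagonal)

variable {R ι K : Type*} [CommRing R] [Fintype ι] [DecidableEq ι] [AddCommGroup K] [Module R K]
  (par : ι → ℕ) (EK : ι → ι → Module.End R K) (PK : Module.End R K)

-- `x₁`, `x̄₁` and `e₁` on `V ⊗ K ⊗ V*`, with the parity operators of `V` and `V*` evaluated.
def casimirX : Module.End R ((ι → R) ⊗[R] (K ⊗[R] (ι → R))) :=
  ∑ a, ∑ b, (-1 : R) ^ (par a * par b) • map (toLin' (single a b 1)) (map (EK b a) LinearMap.id)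

def casimirXbar : Module.End R ((ι → R) ⊗[R] (K ⊗[R] (ι → R))) :=
  ∑ a, ∑ b, (-1 : R) ^ (par a * par b + 1) • map (LinearMap.id : Module.End R (ι → R))
    (map (EK a b * PK ^ (par a + par b)) (toLin' (single a b 1)))

def casimirE : Module.End R ((ι → R) ⊗[R] (K ⊗[R] (ι → R))) :=
  ∑ a, ∑ b, (-1 : R) ^ (par b + 1) •
    map (toLin' (single a b 1)) (map (PK ^ (par a + par b)) (toLin' (single a b 1)))

theorem casimirX_eq : casimirX par EK = ∑ a, ∑ b, (-1 : R) ^ par b •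
    map (toLin' (single a b 1) * toLin' (diagonal fun i => (-1 : R) ^ par i) ^ (par a + par b))
      (map (EK b a) LinearMap.id) := by
  refine Finset.sum_congr rfl fun a _ => Finset.sum_congr rfl fun b _ => ?_
  rw [Matrix.toLin'_single_one_mul_toLin'_diagonal_pow, map_smul_left, smul_smul, ← pow_mul,
    ← pow_add]
  refine neg_one_pow_smul_congr ?_ _
  simp only [Nat.even_add, Nat.even_mul]; tauto

theorem casimirXbar_eq : casimirXbar par EK PK = ∑ a, ∑ b, (-1 : R) ^ par b •
    map LinearMap.id (map (EK a b * PK ^ (par a + par b))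
      (toLin' ((-(-1 : R) ^ (par b * (par b + par a))) • single a b 1))) := by
  refine Finset.sum_congr rfl fun a _ => Finset.sum_congr rfl fun b _ => ?_
  rw [map_smul, map_smul_right, map_smul_right, smul_smul, ← mul_neg_one ((-1 : R) ^ _),
    ← pow_succ, ← pow_add]
  refine neg_one_pow_smul_congr ?_ _
  simp only [Nat.even_add, Nat.even_mul, Nat.even_add_one]; tauto

theorem casimirE_eq : casimirE par PK = ∑ a, ∑ b, (-1 : R) ^ par b •
    map (toLin' (single a b 1) * toLin' (diagonal fun i => (-1 : R) ^ par i) ^ (par a + par b))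
      (map (PK ^ (par a + par b))
        (toLin' ((-(-1 : R) ^ (par b * (par b + par a))) • single a b 1))) := by
  refine Finset.sum_congr rfl fun a _ => Finset.sum_congr rfl fun b _ => ?_
  rw [Matrix.toLin'_single_one_mul_toLin'_diagonal_pow, map_smul, map_smul_right, map_smul_right,
    map_smul_left, smul_smul, smul_smul, ← mul_neg_one ((-1 : R) ^ _), ← pow_succ, ← pow_mul,
    ← pow_add, ← pow_add]
  refine neg_one_pow_smul_congr ?_ _
  simp only [Nat.even_add, Nat.even_mul, Nat.even_add_one]; tauto

theorem casimirX_mul_casimirE : casimirX par EK * casimirE par PK =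
    ∑ a, ∑ b, ∑ d, (-1 : R) ^ (par a * par b + par d + 1) •
      map (toLin' (single a d 1))
        (map (EK b a * PK ^ (par b + par d)) (toLin' (single b d 1))) := by
  refine Finset.sum_sum_mul_sum_sum_of_mul_eq_ite _ _ _ fun a b c d => ?_
  rw [smul_mul_smul_comm, map_map_mul_map_map, Matrix.toLin'_single_one_mul_toLin'_single_one,
    ← pow_add, ← add_assoc]
  split_ifs with hbc
  · rw [hbc, ← Module.End.one_eq_id, one_mul]
  · rw [map_zero_left, smul_zero]

theorem casimirXbar_mul_casimirE (hPK : PK * PK = 1) :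
    casimirXbar par EK PK * casimirE par PK =
    ∑ a, ∑ b, ∑ d, (-1 : R) ^ (par a * par b + par d) •
      map (toLin' (single a d 1))
        (map (EK b a * PK ^ (par b + par d)) (toLin' (single b d 1))) := by
  rw [casimirXbar, casimirE, Finset.sum_sum_mul_sum_sum_of_mul_eq_ite _ _
    (fun a b d => (-1 : R) ^ (par a * par b + 1 + (par d + 1)) •
      map (toLin' (single b d 1)) (map (EK a b * PK ^ (par a + par d)) (toLin' (single a d 1)))),
    Finset.sum_comm]
  · refine Finset.sum_congr rfl fun a _ => Finset.sum_congr rfl fun b _ =>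
      Finset.sum_congr rfl fun d _ => neg_one_pow_smul_congr ?_ _
    simp only [Nat.even_add, Nat.even_mul, Nat.even_add_one]; tauto
  · intro a b c d
    rw [smul_mul_smul_comm, map_map_mul_map_map, Matrix.toLin'_single_one_mul_toLin'_single_one,
      ← pow_add]
    split_ifs with hbc
    · rw [← hbc, ← Module.End.one_eq_id, one_mul, mul_assoc,
        pow_add_mul_pow_add_of_mul_self_eq_one hPK]
    · rw [map_zero_right, map_zero_right, smul_zero]

theorem casimirE_mul_casimirX
    (hPKE : ∀ a b, PK * EK a b = (-1 : R) ^ (par a + par b) • (EK a b * PK)) :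
    casimirE par PK * casimirX par EK =
    ∑ a, ∑ b, ∑ d,
      (-1 : R) ^ (par b + par b * par d + (par d + par b) * (par a + par b) + 1) •
        map (toLin' (single a d 1))
          (map (EK d b * PK ^ (par a + par b)) (toLin' (single a b 1))) := by
  refine Finset.sum_sum_mul_sum_sum_of_mul_eq_ite _ _ _ fun a b c d => ?_
  rw [smul_mul_smul_comm, map_map_mul_map_map, Matrix.toLin'_single_one_mul_toLin'_single_one,
    ← pow_add]
  split_ifs with hbc
  · rw [← hbc, ← Module.End.one_eq_id, mul_one, pow_mul_eq_smul_mul_pow (hPKE d b),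
      map_smul_left, map_smul_right, smul_smul, ← pow_mul, ← pow_add]
    refine neg_one_pow_smul_congr ?_ _
    simp only [Nat.even_add, Nat.even_mul, Nat.even_add_one]; tauto
  · rw [map_zero_left, smul_zero]

theorem casimirE_mul_casimirXbar (hPK : PK * PK = 1)
    (hPKE : ∀ a b, PK * EK a b = (-1 : R) ^ (par a + par b) • (EK a b * PK)) :
    casimirE par PK * casimirXbar par EK PK =
    ∑ a, ∑ b, ∑ d, (-1 : R) ^ (par b + par b * par d + (par d + par b) * (par a + par b)) •
      map (toLin' (single a d 1))
        (map (EK d b * PK ^ (par a + par b)) (toLin' (single a b 1))) := by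
  rw [casimirE, casimirXbar, Finset.sum_sum_mul_sum_sum_of_mul_eq_ite _ _
    (fun a b d =>
      (-1 : R) ^ (par b + 1 + (par b * par d + 1) + (par b + par d) * (par a + par b)) •
        map (toLin' (single a b 1)) (map (EK b d * PK ^ (par a + par d)) (toLin' (single a d 1))))]
  · refine Finset.sum_congr rfl fun a _ => ?_
    rw [Finset.sum_comm]
    refine Finset.sum_congr rfl fun b _ => Finset.sum_congr rfl fun d _ =>
      neg_one_pow_smul_congr ?_ _
    simp only [Nat.even_add, Nat.even_mul, Nat.even_add_one]; tauto
  · intro a b c d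
    rw [smul_mul_smul_comm, map_map_mul_map_map, Matrix.toLin'_single_one_mul_toLin'_single_one,
      ← pow_add]
    split_ifs with hbc
    · rw [← hbc, ← Module.End.one_eq_id, mul_one, ← mul_assoc,
        pow_mul_eq_smul_mul_pow (hPKE b d), smul_mul_assoc, mul_assoc,
        pow_add_mul_pow_add_of_mul_self_eq_one hPK, map_smul_left, map_smul_right, smul_smul,
        ← pow_mul, ← pow_add]
    · rw [map_zero_right, map_zero_right, smul_zero]

theorem casimirX_add_casimirXbar_mul_casimirE (hPK : PK * PK = 1) :
    (casimirX par EK + casimirXbar par EK PK) * casimirE par PK = 0 := by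
  rw [add_mul, casimirX_mul_casimirE, casimirXbar_mul_casimirE par EK PK hPK]
  simp only [← Finset.sum_add_distrib, ← add_smul, pow_succ, mul_neg_one, neg_add_cancel,
    zero_smul, Finset.sum_const_zero]

theorem casimirE_mul_casimirX_add_casimirXbar (hPK : PK * PK = 1)
    (hPKE : ∀ a b, PK * EK a b = (-1 : R) ^ (par a + par b) • (EK a b * PK)) :
    casimirE par PK * (casimirX par EK + casimirXbar par EK PK) = 0 := by
  rw [mul_add, casimirE_mul_casimirX par EK PK hPKE, casimirE_mul_casimirXbar par EK PK hPK hPKE]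
  simp only [← Finset.sum_add_distrib, ← add_smul, pow_succ, mul_neg_one, neg_add_cancel,
    zero_smul, Finset.sum_const_zero]

end Casimir

theorem casimir_x_xbar_e_general (m n : ℕ)
    (par : Fin (m + n) → ℕ)
    (K : Type*) [AddCommGroup K] [Module ℂ K]
    (EK : Fin (m + n) → Fin (m + n) → Module.End ℂ K)
    (PK : Module.End ℂ K) (hPK : PK * PK = 1)
    (hPKE : ∀ a b, PK * EK a b = ((-1 : ℂ) ^ (par a + par b)) • (EK a b * PK))
    (EV : Fin (m + n) → Fin (m + n) → Module.End ℂ (Fin (m + n) → ℂ))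
    (hEV : ∀ a b, EV a b = Matrix.toLin' (Matrix.single a b 1))
    (EVd : Fin (m + n) → Fin (m + n) → Module.End ℂ (Fin (m + n) → ℂ))
    (hEVd : ∀ a b, EVd a b =
      Matrix.toLin' ((-(-1 : ℂ) ^ (par a * (par a + par b))) • Matrix.single b a 1))
    (PV : Module.End ℂ (Fin (m + n) → ℂ))
    (hPV : PV = Matrix.toLin' (Matrix.diagonal fun i => (-1 : ℂ) ^ (par i)))
    (x1 xb1 e1 : Module.End ℂ ((Fin (m + n) → ℂ) ⊗[ℂ] (K ⊗[ℂ] (Fin (m + n) → ℂ))))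
    (hx1 : x1 = ∑ a, ∑ b, ((-1 : ℂ) ^ (par b)) •
      TensorProduct.map (EV a b * PV ^ (par a + par b))
        (TensorProduct.map (EK b a) (LinearMap.id : (Fin (m + n) → ℂ) →ₗ[ℂ] (Fin (m + n) → ℂ))))
    (hxb1 : xb1 = ∑ a, ∑ b, ((-1 : ℂ) ^ (par b)) •
      TensorProduct.map (LinearMap.id : (Fin (m + n) → ℂ) →ₗ[ℂ] (Fin (m + n) → ℂ))
        (TensorProduct.map (EK a b * PK ^ (par a + par b)) (EVd b a)))
    (he1 : e1 = ∑ a, ∑ b, ((-1 : ℂ) ^ (par b)) •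
      TensorProduct.map (EV a b * PV ^ (par a + par b))
        (TensorProduct.map (PK ^ (par a + par b)) (EVd b a))) :
    (x1 + xb1) * e1 = 0 ∧ e1 * (x1 + xb1) = 0 := by
  subst hx1 hxb1 he1 hPV
  simp only [hEV, hEVd]
  rw [← casimirX_eq, ← casimirXbar_eq, ← casimirE_eq]
  exact ⟨casimirX_add_casimirXbar_mul_casimirE par EK PK hPK,
    casimirE_mul_casimirX_add_casimirXbar par EK PK hPK hPKE⟩

/-- On `V ⊗ K_λ ⊗ V*` over `gl(m|n)` (with `K_λ` the Kac module with highest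
weight `λ = (p,…,p|−q,…,−q)`, rendered as a ℤ₂-graded module `K` with parity
operator `PK`, a `gl(m|n)`-action `EK` and an even highest weight vector `vlam`),
the Casimir operators satisfy `(x₁ + x̄₁) e₁ = 0` and `e₁ (x₁ + x̄₁) = 0`, where
`x₁ = π_{10}(Ω)`, `x̄₁ = π_{01̄}(Ω)`, `e₁ = π_{11̄}(Ω)` for
`Ω = ∑_{a,b} (−1)^{[b]} E_{ab} ⊗ E_{ba}` with the super sign rules. -/
theorem casimir_x_xbar_e (m n : ℕ) (pp qq : ℂ)
    (par : Fin (m + n) → ℕ) (hpar : ∀ i, par i = if (i : ℕ) < m then 0 else 1)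
    (K : Type*) [AddCommGroup K] [Module ℂ K]
    (EK : Fin (m + n) → Fin (m + n) → Module.End ℂ K)
    (PK : Module.End ℂ K) (hPK : PK * PK = 1)
    (hPKE : ∀ a b, PK * EK a b = ((-1 : ℂ) ^ (par a + par b)) • (EK a b * PK))
    (hbr : ∀ i j k l, EK i j * EK k l
        - ((-1 : ℂ) ^ ((par i + par j) * (par k + par l))) • (EK k l * EK i j)
      = (if j = k then EK i l else 0)
        - ((-1 : ℂ) ^ ((par i + par j) * (par k + par l))) • (if l = i then EK k j else 0))
    (vlam : K) (hPv : PK vlam = vlam)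
    (hw1 : ∀ i : Fin (m + n), (i : ℕ) < m → EK i i vlam = pp • vlam)
    (hw2 : ∀ i : Fin (m + n), m ≤ (i : ℕ) → EK i i vlam = (-qq) • vlam)
    (hw0 : ∀ i j : Fin (m + n), i ≠ j →
      (((i : ℕ) < m ∧ (j : ℕ) < m) ∨ (m ≤ (i : ℕ) ∧ m ≤ (j : ℕ))) → EK i j vlam = 0)
    (EV : Fin (m + n) → Fin (m + n) → Module.End ℂ (Fin (m + n) → ℂ))
    (hEV : ∀ a b, EV a b = Matrix.toLin' (Matrix.single a b 1))
    (EVd : Fin (m + n) → Fin (m + n) → Module.End ℂ (Fin (m + n) → ℂ))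
    (hEVd : ∀ a b, EVd a b =
      Matrix.toLin' ((-(-1 : ℂ) ^ (par a * (par a + par b))) • Matrix.single b a 1))
    (PV : Module.End ℂ (Fin (m + n) → ℂ))
    (hPV : PV = Matrix.toLin' (Matrix.diagonal fun i => (-1 : ℂ) ^ (par i)))
    (x1 xb1 e1 : Module.End ℂ ((Fin (m + n) → ℂ) ⊗[ℂ] (K ⊗[ℂ] (Fin (m + n) → ℂ))))
    (hx1 : x1 = ∑ a, ∑ b, ((-1 : ℂ) ^ (par b)) •
      TensorProduct.map (EV a b * PV ^ (par a + par b))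
        (TensorProduct.map (EK b a) (LinearMap.id : (Fin (m + n) → ℂ) →ₗ[ℂ] (Fin (m + n) → ℂ))))
    (hxb1 : xb1 = ∑ a, ∑ b, ((-1 : ℂ) ^ (par b)) •
      TensorProduct.map (LinearMap.id : (Fin (m + n) → ℂ) →ₗ[ℂ] (Fin (m + n) → ℂ))
        (TensorProduct.map (EK a b * PK ^ (par a + par b)) (EVd b a)))
    (he1 : e1 = ∑ a, ∑ b, ((-1 : ℂ) ^ (par b)) •
      TensorProduct.map (EV a b * PV ^ (par a + par b))
        (TensorProduct.map (PK ^ (par a + par b)) (EVd b a))) :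
    (x1 + xb1) * e1 = 0 ∧ e1 * (x1 + xb1) = 0 :=
  casimir_x_xbar_e_general m n par K EK PK hPK hPKE EV hEV EVd hEVd PV hPV x1 xb1 e1 hx1 hxb1 he1
end

section
/- In the walled Brauer algebra B_{r,t}(δ), defining y_i = δ_1 + Σ_{j=1}^{i−1} e_{i,j} − L_i for a fixed δ_1 ∈ R, the elements y_i and y_{i+1} commute: y_i y_{i+1} = y_{i+1} y_i for 1 ≤ i < min(r,t). -/
/-- `s_{1,i} = s_1 s_2 ⋯ s_{i-1}`. -/
def wordUp {A : Type*} [Ring A] (s : ℕ → A) (i : ℕ) : A :=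
  ((List.range (i - 1)).map fun k => s (k + 1)).prod

/-- `s_{i,1} = s_{i-1} ⋯ s_2 s_1`. -/
def wordDown {A : Type*} [Ring A] (s : ℕ → A) (i : ℕ) : A :=
  ((List.range (i - 1)).map fun k => s (i - 1 - k)).prod

/-- The transposition `(j,i)` (for `j < i`) written as the word
`s_{i-1} ⋯ s_{j+1} s_j s_{j+1} ⋯ s_{i-1}`. -/
def transpWord {A : Type*} [Ring A] (s : ℕ → A) (j i : ℕ) : A :=
  ((List.range (i - 1 - j)).map fun k => s (i - 1 - k)).prod * s j *
    ((List.range (i - 1 - j)).map fun k => s (j + 1 + k)).prod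

/-- The Jucys–Murphy element `L_i = ∑_{j=1}^{i-1} (j,i)`. -/
def jmElt {A : Type*} [Ring A] (s : ℕ → A) (i : ℕ) : A :=
  ∑ j ∈ Finset.Ico 1 i, transpWord s j i

/-- `e_{i,j} = s̄_{j,1} s_{i,1} e_1 s_{1,i} s̄_{1,j}`. -/
def eElt {A : Type*} [Ring A] (s sb : ℕ → A) (e : A) (i j : ℕ) : A :=
  wordDown sb j * wordDown s i * e * wordUp s i * wordUp sb j

/-! Since `y_i` is built from `δ₁`, the `s_l`, `s̄_l` with `l < i`, and `e`, it suffices that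
`y_{i+1}` commutes with each of these generators.

* `s_k`: it commutes with `L_{i+1}` (the classical Jucys–Murphy fact); moving `s_k` through the
  word `s_{i+1,1}` turns it into `s_{k+1}`, which commutes with `e`, and moving that through
  `s_{1,i+1}` turns it back into `s_k`, so `s_k` commutes with every `e_{i+1,j}`.
* `s̄_k`: conjugation fixes `e_{i+1,j}` for `j ∉ {k, k+1}` and swaps `e_{i+1,k}`, `e_{i+1,k+1}`.
* `e`: `e_{i+1,1} - (1,i+1) = C (s₁ e s₁ - s₁) C'` with `C, C'` words in `s_2, …, s_i`, and
  `e s₁ e = e` makes `e` annihilate `s₁ e s₁ - s₁` on both sides; for `j ≥ 2`, `e_{i+1,j}` is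
  `s̄₁ s₁ e s₁ s̄₁` conjugated by words in letters commuting with `e`, and the two mixed relations
  make `e` commute with `s̄₁ s₁ e s₁ s̄₁`.
-/

section Words

variable {A : Type*} [Ring A] {g : ℕ → A} {x : A}

@[simp]
lemma wordDown_one : wordDown g 1 = 1 := by
  simp [wordDown]

@[simp]
lemma wordUp_one : wordUp g 1 = 1 := by
  simp [wordUp]

lemma wordDown_succ {m : ℕ} (hm : 1 ≤ m) : wordDown g (m + 1) = g m * wordDown g m := by
  obtain ⟨n, rfl⟩ := Nat.exists_eq_add_of_le' hm
  simp only [wordDown, Nat.add_sub_cancel, List.range_succ_eq_map, List.map_cons,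
    List.prod_cons, List.map_map]
  congr 2
  exact List.map_congr_left fun k _ => by simp only [Function.comp_apply]; congr 1; omega

lemma wordUp_succ {m : ℕ} (hm : 1 ≤ m) : wordUp g (m + 1) = wordUp g m * g m := by
  obtain ⟨n, rfl⟩ := Nat.exists_eq_add_of_le' hm
  simp [wordUp, List.range_succ]

lemma wordDown_succ_eq_shift_mul {m : ℕ} (hm : 1 ≤ m) :
    wordDown g (m + 1) = wordDown (fun k => g (k + 1)) m * g 1 := by
  obtain ⟨n, rfl⟩ := Nat.exists_eq_add_of_le' hm
  simp only [wordDown, Nat.add_sub_cancel, List.range_succ, List.map_append, List.prod_append,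
    List.map_cons, List.map_nil, List.prod_cons, List.prod_nil, mul_one]
  congr 2
  · exact List.map_congr_left fun k hk => by
      rw [List.mem_range] at hk; congr 1; omega
  · omega

lemma wordUp_succ_eq_mul_shift {m : ℕ} (hm : 1 ≤ m) :
    wordUp g (m + 1) = g 1 * wordUp (fun k => g (k + 1)) m := by
  obtain ⟨n, rfl⟩ := Nat.exists_eq_add_of_le' hm
  simp only [wordUp, Nat.add_sub_cancel, List.range_succ_eq_map, List.map_cons, List.map_map,
    List.prod_cons]
  rfl

lemma transpWord_one_succ (m : ℕ) : transpWord g 1 (m + 1) =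
    wordDown (fun k => g (k + 1)) m * g 1 * wordUp (fun k => g (k + 1)) m := by
  simp only [transpWord, wordDown, wordUp, Nat.add_sub_cancel]
  congr 3
  · exact List.map_congr_left fun k hk => by
      rw [List.mem_range] at hk; congr 1; omega
  · funext k; congr 1; omega

lemma transpWord_succ_self (m : ℕ) : transpWord g m (m + 1) = g m := by
  simp [transpWord]

lemma transpWord_succ {j m : ℕ} (hjm : j < m) :
    transpWord g j (m + 1) = g m * transpWord g j m * g m := by
  generalize hn : m - 1 - j = n
  have hlen : m + 1 - 1 - j = n + 1 := by omega
  have hdown : ((List.range (n + 1)).map fun k => g (m + 1 - 1 - k)).prod =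
      g m * ((List.range n).map fun k => g (m - 1 - k)).prod := by
    simp only [List.range_succ_eq_map, List.map_cons, List.prod_cons, List.map_map]
    congr 2
    exact List.map_congr_left fun k _ => by simp only [Function.comp_apply]; congr 1; omega
  have hup : ((List.range (n + 1)).map fun k => g (j + 1 + k)).prod =
      ((List.range n).map fun k => g (j + 1 + k)).prod * g m := by
    simp only [List.range_succ, List.map_append, List.prod_append, List.map_cons, List.map_nil,
      List.prod_cons, List.prod_nil, mul_one]
    congr 2
    omega
  simp only [transpWord, hlen, hn, hdown, hup, mul_assoc]

lemma jmElt_succ {m : ℕ} (hm : 1 ≤ m) : jmElt g (m + 1) = g m * jmElt g m * g m + g m := by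
  rw [jmElt, Finset.sum_Ico_succ_top hm, transpWord_succ_self, jmElt, Finset.mul_sum,
    Finset.sum_mul]
  congr 1
  exact Finset.sum_congr rfl fun j hj => transpWord_succ (Finset.mem_Ico.mp hj).2

lemma commute_list_range_prod {f : ℕ → A} {n : ℕ} (h : ∀ k < n, Commute x (f k)) :
    Commute x ((List.range n).map f).prod :=
  Commute.list_prod_right _ _ <| by simpa using h

lemma commute_wordDown {m : ℕ} (h : ∀ l, 1 ≤ l → l < m → Commute x (g l)) :
    Commute x (wordDown g m) :=
  commute_list_range_prod fun k hk => h _ (by omega) (by omega)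

lemma commute_wordUp {m : ℕ} (h : ∀ l, 1 ≤ l → l < m → Commute x (g l)) :
    Commute x (wordUp g m) :=
  commute_list_range_prod fun k hk => h _ (by omega) (by omega)

lemma commute_transpWord {j m : ℕ} (hjm : j < m) (h : ∀ l, j ≤ l → l < m → Commute x (g l)) :
    Commute x (transpWord g j m) :=
  ((commute_list_range_prod fun k hk => h _ (by omega) (by omega)).mul_right
    (h j le_rfl hjm)).mul_right (commute_list_range_prod fun k hk => h _ (by omega) (by omega))

lemma commute_jmElt {m : ℕ} (h : ∀ l, 1 ≤ l → l < m → Commute x (g l)) :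
    Commute x (jmElt g m) :=
  Commute.sum_right _ _ _ fun j hj => by
    rw [Finset.mem_Ico] at hj
    exact commute_transpWord hj.2 fun l hl hlm => h l (by omega) hlm

end Words

structure IsCoxeterTypeA {A : Type*} [Monoid A] (g : ℕ → A) (n : ℕ) : Prop where
  mul_self : ∀ i, 1 ≤ i → i < n → g i * g i = 1
  commute : ∀ i j, 1 ≤ i → i < n → 1 ≤ j → j < n → (i + 1 < j ∨ j + 1 < i) → Commute (g i) (g j)
  braid : ∀ i, 1 ≤ i → i + 1 < n → g i * g (i + 1) * g i = g (i + 1) * g i * g (i + 1)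

namespace IsCoxeterTypeA

variable {A : Type*} [Ring A] {g : ℕ → A} {n k m : ℕ}

lemma commute_of_add_two_le (hg : IsCoxeterTypeA g n) {l : ℕ} (hl : 1 ≤ l) (hlk : l + 2 ≤ k)
    (hk : k < n) : Commute (g k) (g l) :=
  hg.commute k l (by omega) hk hl (by omega) (Or.inr (by omega))

lemma semiconjBy_wordDown (hg : IsCoxeterTypeA g n) (hk : 1 ≤ k) (hkm : k + 2 ≤ m)
    (hmn : m ≤ n) : SemiconjBy (wordDown g m) (g (k + 1)) (g k) := by
  induction m, hkm using Nat.le_induction with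
  | base =>
    rw [wordDown_succ (by omega), wordDown_succ hk, ← mul_assoc]
    refine SemiconjBy.mul_left ?_ (commute_wordDown (x := g (k + 1)) fun l hl hlk =>
      hg.commute_of_add_two_le hl (by omega) (by omega)).symm
    simp only [SemiconjBy, ← hg.braid k hk (by omega), mul_assoc]
  | succ m hkm ih =>
    rw [wordDown_succ (by omega)]
    exact SemiconjBy.mul_left (hg.commute_of_add_two_le hk hkm (by omega)) (ih (by omega))

lemma semiconjBy_wordUp (hg : IsCoxeterTypeA g n) (hk : 1 ≤ k) (hkm : k + 2 ≤ m)
    (hmn : m ≤ n) : SemiconjBy (wordUp g m) (g k) (g (k + 1)) := by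
  induction m, hkm using Nat.le_induction with
  | base =>
    rw [wordUp_succ (by omega), wordUp_succ hk, mul_assoc]
    refine SemiconjBy.mul_left (commute_wordUp (x := g (k + 1)) fun l hl hlk =>
      hg.commute_of_add_two_le hl (by omega) (by omega)).symm ?_
    simp only [SemiconjBy, hg.braid k hk (by omega), mul_assoc]
  | succ m hkm ih =>
    rw [wordUp_succ (by omega)]
    exact SemiconjBy.mul_left (ih (by omega)) (hg.commute_of_add_two_le hk hkm (by omega))

lemma commute_jmElt_add_two (hg : IsCoxeterTypeA g n) (hk : 1 ≤ k) (hkn : k + 2 ≤ n) :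
    Commute (g k) (jmElt g (k + 2)) := by
  have hbP : Commute (g (k + 1)) (jmElt g k) :=
    commute_jmElt fun l hl hlk => hg.commute_of_add_two_le hl (by omega) (by omega)
  have ha := hg.mul_self k hk (by omega)
  have hbr := hg.braid k hk (by omega)
  rw [jmElt_succ (by omega), jmElt_succ hk]
  generalize g k = a, g (k + 1) = b, jmElt g k = P at *
  have hconj : Commute a (b * a * P * a * b) :=
    calc a * (b * a * P * a * b) = a * b * a * P * (a * b) := by noncomm_ring
      _ = b * a * (b * P) * (a * b) := by rw [hbr]; noncomm_ring
      _ = b * a * P * (b * a * b) := by rw [hbP.eq]; noncomm_ring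
      _ = b * a * P * a * b * a := by rw [← hbr]; noncomm_ring
  have hbab : Commute a (b * a * b + b) :=
    calc a * (b * a * b + b) = a * a * (b * a) + a * b := by rw [← hbr]; noncomm_ring
      _ = a * b * a * a + b * a := by rw [mul_assoc _ a a, ha, one_mul, mul_one, add_comm]
      _ = (b * a * b + b) * a := by rw [hbr]; noncomm_ring
  convert hconj.add_right hbab using 1
  noncomm_ring

lemma commute_jmElt_of_add_two_le (hg : IsCoxeterTypeA g n) (hk : 1 ≤ k) (hkm : k + 2 ≤ m)
    (hmn : m ≤ n) : Commute (g k) (jmElt g m) := by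
  induction m, hkm using Nat.le_induction with
  | base => exact hg.commute_jmElt_add_two hk hmn
  | succ m hkm ih =>
    have hkm' : Commute (g k) (g m) := (hg.commute_of_add_two_le hk hkm (by omega)).symm
    rw [jmElt_succ (by omega)]
    exact ((hkm'.mul_right (ih (by omega))).mul_right hkm').add_right hkm'

end IsCoxeterTypeA

lemma commute_add_conj_of_mul_self {A : Type*} [Ring A] {a : A} (x : A) (ha : a * a = 1) :
    Commute a (x + a * x * a) := by
  simp only [Commute, SemiconjBy, mul_add, add_mul, ← mul_assoc, ha, one_mul]
  rw [mul_assoc, ha, mul_one, add_comm]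

lemma commute_self_conj_sub {A : Type*} [Ring A] {a e : A} (h : e * a * e = e) :
    Commute e (a * e * a - a) := by
  have hl : e * (a * e * a) = e * a := by rw [← mul_assoc, ← mul_assoc, h]
  have hr : a * e * a * e = a * e := by rw [mul_assoc, mul_assoc, ← mul_assoc e, h]
  rw [Commute, SemiconjBy, mul_sub, sub_mul, hl, hr, sub_self, sub_self]

lemma commute_self_conj_conj {M : Type*} [Monoid M] {a b e : M} (hab : Commute a b)
    (hb : b * b = 1) (hl : e * a * b * e * a = e * a * b * e * b)
    (hr : a * e * a * b * e = b * e * a * b * e) :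
    Commute e (b * (a * e * a) * b) :=
  calc e * (b * (a * e * a) * b) = e * a * b * e * a * b := by
        simp only [mul_assoc, ← hab.left_comm, hab.eq]
    _ = e * a * b * e := by rw [hl, mul_assoc _ b b, hb, mul_one]
    _ = b * (b * e * a * b * e) := by simp only [← mul_assoc, hb, one_mul]
    _ = b * (a * e * a) * b * e := by rw [← hr]; simp only [mul_assoc]

section WalledBrauer

variable {R : Type*} [CommRing R] {A : Type*} [Ring A] [Algebra R A] {s sb : ℕ → A} {e : A}
  {r t : ℕ}

def yElt (δ₁ : R) (s sb : ℕ → A) (e : A) (i : ℕ) : A :=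
  algebraMap R A δ₁ + (∑ j ∈ Finset.Ico 1 i, eElt s sb e i j) - jmElt s i

lemma eElt_succ_right {i j : ℕ} (hj : 1 ≤ j) :
    eElt s sb e i (j + 1) = sb j * eElt s sb e i j * sb j := by
  simp only [eElt, wordDown_succ hj, wordUp_succ hj, mul_assoc]

lemma commute_eElt {x : A} {i j : ℕ} (hs : ∀ l, 1 ≤ l → l < i → Commute x (s l))
    (hsb : ∀ l, 1 ≤ l → l < j → Commute x (sb l)) (he : Commute x e) :
    Commute x (eElt s sb e i j) :=
  ((((commute_wordDown hsb).mul_right (commute_wordDown hs)).mul_right he).mul_right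
    (commute_wordUp hs)).mul_right (commute_wordUp hsb)

lemma commute_yElt (δ₁ : R) {x : A} {i : ℕ} (hs : ∀ l, 1 ≤ l → l < i → Commute x (s l))
    (hsb : ∀ l, 1 ≤ l → l < i → Commute x (sb l)) (he : 2 ≤ i → Commute x e) :
    Commute x (yElt δ₁ s sb e i) := by
  refine ((Algebra.commute_algebraMap_right δ₁ x).add_right
    (Commute.sum_right _ _ _ fun j hj => ?_)).sub_right (commute_jmElt hs)
  rw [Finset.mem_Ico] at hj
  exact commute_eElt hs (fun l hl hlj => hsb l hl (by omega)) (he (by omega))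

lemma semiconjBy_eElt {i j : ℕ} {a b c d f : A} (h₁ : SemiconjBy (wordDown sb j) b a)
    (h₂ : SemiconjBy (wordDown s i) c b) (h₃ : Commute e c) (h₄ : SemiconjBy (wordUp s i) d c)
    (h₅ : SemiconjBy (wordUp sb j) f d) : SemiconjBy (eElt s sb e i j) f a :=
  (((h₁.mul_left h₂).mul_left h₃).mul_left h₄).mul_left h₅

lemma commute_s_yElt (δ₁ : R) (hs : IsCoxeterTypeA s r)
    (hse : ∀ i, 2 ≤ i → i < r → Commute (s i) e)
    (hssb : ∀ i j, 1 ≤ i → i < r → 1 ≤ j → j < t → Commute (s i) (sb j))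
    {k m : ℕ} (hk : 1 ≤ k) (hkm : k + 2 ≤ m) (hmr : m ≤ r) (hmt : m ≤ t) :
    Commute (s k) (yElt δ₁ s sb e m) := by
  refine ((Algebra.commute_algebraMap_right δ₁ _).add_right
    (Commute.sum_right _ _ _ fun j hj => ?_)).sub_right (hs.commute_jmElt_of_add_two_le hk hkm hmr)
  rw [Finset.mem_Ico] at hj
  have hsb : ∀ l, 1 ≤ l → l < j → Commute (s k) (sb l) :=
    fun l hl hlj => hssb k l hk (by omega) hl (by omega)
  exact (semiconjBy_eElt (commute_wordDown hsb).symm (hs.semiconjBy_wordDown hk hkm hmr)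
    (hse (k + 1) (by omega) (by omega)).symm (hs.semiconjBy_wordUp hk hkm hmr)
    (commute_wordUp hsb).symm).symm

lemma commute_sb_eElt_of_ne (hsb : IsCoxeterTypeA sb t)
    (hsbe : ∀ i, 2 ≤ i → i < t → Commute (sb i) e)
    (hssb : ∀ i j, 1 ≤ i → i < r → 1 ≤ j → j < t → Commute (s i) (sb j))
    {k m j : ℕ} (hk : 1 ≤ k) (hkm : k + 2 ≤ m) (hj : 1 ≤ j) (hjm : j < m) (hmr : m ≤ r)
    (hmt : m ≤ t) (hjk : j ≠ k) (hjk' : j ≠ k + 1) : Commute (sb k) (eElt s sb e m j) := by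
  rcases lt_or_gt_of_ne hjk with hjk | hjk
  · exact commute_eElt (fun l hl hlm => (hssb l k hl (by omega) hk (by omega)).symm)
      (fun l hl hlj => hsb.commute k l hk (by omega) hl (by omega) (Or.inr (by omega)))
      (hsbe k (by omega) (by omega))
  · have hs : ∀ l, 1 ≤ l → l < m → Commute (sb (k + 1)) (s l) :=
      fun l hl hlm => (hssb l (k + 1) hl (by omega) (by omega) (by omega)).symm
    exact (semiconjBy_eElt (hsb.semiconjBy_wordDown hk (by omega) (by omega))
      (commute_wordDown hs).symm (hsbe (k + 1) (by omega) (by omega)).symm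
      (commute_wordUp hs).symm (hsb.semiconjBy_wordUp hk (by omega) (by omega))).symm

lemma commute_sb_yElt (δ₁ : R) (hsb : IsCoxeterTypeA sb t)
    (hsbe : ∀ i, 2 ≤ i → i < t → Commute (sb i) e)
    (hssb : ∀ i j, 1 ≤ i → i < r → 1 ≤ j → j < t → Commute (s i) (sb j))
    {k m : ℕ} (hk : 1 ≤ k) (hkm : k + 2 ≤ m) (hmr : m ≤ r) (hmt : m ≤ t) :
    Commute (sb k) (yElt δ₁ s sb e m) := by
  set f := fun j => eElt s sb e m j
  have hsplit : ∑ j ∈ Finset.Ico 1 m, f j =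
      ∑ j ∈ Finset.Ico 1 k, f j + (f k + sb k * f k * sb k) + ∑ j ∈ Finset.Ico (k + 2) m, f j := by
    rw [← Finset.sum_Ico_consecutive _ hk (by omega : k ≤ m),
      Finset.sum_eq_sum_Ico_succ_bot (by omega : k < m),
      Finset.sum_eq_sum_Ico_succ_bot (by omega : k + 1 < m), ← eElt_succ_right hk]
    abel
  have hf : ∀ j, 1 ≤ j → j < m → j ≠ k → j ≠ k + 1 → Commute (sb k) (f j) :=
    fun j hj hjm => commute_sb_eElt_of_ne hsb hsbe hssb hk hkm hj hjm hmr hmt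
  refine ((Algebra.commute_algebraMap_right δ₁ _).add_right ?_).sub_right
    (commute_jmElt fun l hl hlm => (hssb l k hl (by omega) hk (by omega)).symm)
  rw [hsplit]
  refine ((Commute.sum_right _ _ _ fun j hj => ?_).add_right
    (commute_add_conj_of_mul_self _ (hsb.mul_self k hk (by omega)))).add_right
    (Commute.sum_right _ _ _ fun j hj => ?_)
  all_goals rw [Finset.mem_Ico] at hj; exact hf j (by omega) (by omega) (by omega) (by omega)

lemma eElt_one_sub_transpWord_one {m : ℕ} (hm : 1 ≤ m) :
    eElt s sb e (m + 1) 1 - transpWord s 1 (m + 1) =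
      wordDown (fun k => s (k + 1)) m * (s 1 * e * s 1 - s 1) * wordUp (fun k => s (k + 1)) m := by
  rw [eElt, wordDown_one, wordUp_one, wordDown_succ_eq_shift_mul hm, wordUp_succ_eq_mul_shift hm,
    transpWord_one_succ]
  noncomm_ring

lemma eElt_succ_succ {m j : ℕ} (hm : 1 ≤ m) (hj : 1 ≤ j)
    (hsbs : ∀ l, 1 ≤ l → l < m → Commute (sb 1) (s (l + 1))) :
    eElt s sb e (m + 1) (j + 1) = wordDown (fun k => sb (k + 1)) j *
      (wordDown (fun k => s (k + 1)) m * (sb 1 * (s 1 * e * s 1) * sb 1) *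
        wordUp (fun k => s (k + 1)) m) * wordUp (fun k => sb (k + 1)) j := by
  simp only [eElt, wordDown_succ_eq_shift_mul hj, wordUp_succ_eq_mul_shift hj,
    wordDown_succ_eq_shift_mul hm, wordUp_succ_eq_mul_shift hm, mul_assoc,
    (commute_wordDown hsbs).left_comm, (commute_wordUp hsbs).left_comm]

lemma commute_e_yElt (δ₁ : R) (hse : ∀ i, 2 ≤ i → i < r → Commute (s i) e)
    (hsbe : ∀ i, 2 ≤ i → i < t → Commute (sb i) e)
    (hssb : ∀ i j, 1 ≤ i → i < r → 1 ≤ j → j < t → Commute (s i) (sb j))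
    (hsb1 : sb 1 * sb 1 = 1) (hese : e * s 1 * e = e)
    (hl : e * s 1 * sb 1 * e * s 1 = e * s 1 * sb 1 * e * sb 1)
    (hr : s 1 * e * s 1 * sb 1 * e = sb 1 * e * s 1 * sb 1 * e)
    {m : ℕ} (hm : 2 ≤ m) (hmr : m < r) (hmt : m < t) :
    Commute e (yElt δ₁ s sb e (m + 1)) := by
  have hs : ∀ l, 1 ≤ l → l < m → Commute e (s (l + 1)) :=
    fun l hl hlm => (hse (l + 1) (by omega) (by omega)).symm
  have hsum : Commute e (∑ j ∈ Finset.Ico 2 (m + 1), eElt s sb e (m + 1) j) := by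
    refine Commute.sum_right _ _ _ fun j hj => ?_
    obtain ⟨j, rfl⟩ : ∃ j', j = j' + 1 := ⟨j - 1, by rw [Finset.mem_Ico] at hj; omega⟩
    rw [Finset.mem_Ico] at hj
    have hsb : ∀ l, 1 ≤ l → l < j → Commute e (sb (l + 1)) :=
      fun l hl hlj => (hsbe (l + 1) (by omega) (by omega)).symm
    have hcore : Commute e (sb 1 * (s 1 * e * s 1) * sb 1) :=
      commute_self_conj_conj (hssb 1 1 le_rfl (by omega) le_rfl (by omega)) hsb1 hl hr
    rw [eElt_succ_succ (by omega) (by omega)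
      fun l hl hlm => (hssb (l + 1) 1 (by omega) (by omega) le_rfl (by omega)).symm]
    exact ((commute_wordDown hsb).mul_right (((commute_wordDown hs).mul_right hcore).mul_right
      (commute_wordUp hs))).mul_right (commute_wordUp hsb)
  have htransp : Commute e (∑ j ∈ Finset.Ico 2 (m + 1), transpWord s j (m + 1)) := by
    refine Commute.sum_right _ _ _ fun j hj => ?_
    rw [Finset.mem_Ico] at hj
    exact commute_transpWord hj.2 fun l hl hlm => (hse l (by omega) (by omega)).symm
  have hsplit : yElt δ₁ s sb e (m + 1) = algebraMap R A δ₁ +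
      (eElt s sb e (m + 1) 1 - transpWord s 1 (m + 1)) +
      ∑ j ∈ Finset.Ico 2 (m + 1), eElt s sb e (m + 1) j -
      ∑ j ∈ Finset.Ico 2 (m + 1), transpWord s j (m + 1) := by
    rw [yElt, jmElt, Finset.sum_eq_sum_Ico_succ_bot (by omega : 1 < m + 1),
      Finset.sum_eq_sum_Ico_succ_bot (by omega : 1 < m + 1)]
    abel
  rw [hsplit, eElt_one_sub_transpWord_one (by omega)]
  exact (((Algebra.commute_algebraMap_right δ₁ e).add_right
    (((commute_wordDown hs).mul_right (commute_self_conj_sub hese)).mul_right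
      (commute_wordUp hs))).add_right hsum).sub_right htransp

end WalledBrauer

theorem walledBrauer_y_commute_general (R : Type*) [CommRing R] (A : Type*) [Ring A] [Algebra R A]
    (r t : ℕ) (s sb : ℕ → A) (e : A)
    (h1 : ∀ i, 1 ≤ i → i < r → s i * s i = 1)
    (h2 : ∀ i j, 1 ≤ i → i < r → 1 ≤ j → j < r → (i + 1 < j ∨ j + 1 < i) →
      s i * s j = s j * s i)
    (h3 : ∀ i, 1 ≤ i → i + 1 < r → s i * s (i + 1) * s i = s (i + 1) * s i * s (i + 1))
    (h4 : ∀ i, 2 ≤ i → i < r → s i * e = e * s i)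
    (h5 : e * s 1 * e = e)
    (h7 : ∀ i j, 1 ≤ i → i < r → 1 ≤ j → j < t → s i * sb j = sb j * s i)
    (h8 : ∀ i, 1 ≤ i → i < t → sb i * sb i = 1)
    (h9 : ∀ i j, 1 ≤ i → i < t → 1 ≤ j → j < t → (i + 1 < j ∨ j + 1 < i) →
      sb i * sb j = sb j * sb i)
    (h10 : ∀ i, 1 ≤ i → i + 1 < t → sb i * sb (i + 1) * sb i = sb (i + 1) * sb i * sb (i + 1))
    (h11 : ∀ i, 2 ≤ i → i < t → sb i * e = e * sb i)
    (h13 : e * s 1 * sb 1 * e * s 1 = e * s 1 * sb 1 * e * sb 1)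
    (h14 : s 1 * e * s 1 * sb 1 * e = sb 1 * e * s 1 * sb 1 * e) (δ1 : R) :
    let y := fun i => algebraMap R A δ1 + (∑ j ∈ Finset.Ico 1 i, eElt s sb e i j) - jmElt s i
    ∀ i, 1 ≤ i → i < min r t → y i * y (i + 1) = y (i + 1) * y i := by
  intro y i hi hirt
  obtain ⟨hir, hit⟩ := lt_min_iff.mp hirt
  have hs : IsCoxeterTypeA s r := ⟨h1, h2, h3⟩
  have hsb : IsCoxeterTypeA sb t := ⟨h8, h9, h10⟩
  have hcomm : Commute (yElt δ1 s sb e (i + 1)) (yElt δ1 s sb e i) :=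
    commute_yElt δ1
      (fun k hk hki => (commute_s_yElt δ1 hs h4 h7 hk (by omega) (by omega) (by omega)).symm)
      (fun k hk hki => (commute_sb_yElt δ1 hsb h11 h7 hk (by omega) (by omega) (by omega)).symm)
      (fun hi2 =>
        (commute_e_yElt δ1 h4 h11 h7 (h8 1 le_rfl (by omega)) h5 h13 h14 hi2 hir hit).symm)
  exact hcomm.symm

/-- In the walled Brauer algebra `B_{r,t}(δ)` (rendered by its presentation),
the Jucys–Murphy-like elements `y_i = δ₁ + ∑_{j<i} e_{i,j} − L_i` satisfy
`y_i y_{i+1} = y_{i+1} y_i` for `1 ≤ i < min(r,t)`. -/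
theorem walledBrauer_y_commute (R : Type*) [CommRing R] (A : Type*) [Ring A] [Algebra R A]
    (r t : ℕ) (δ : R) (s sb : ℕ → A) (e : A)
    (h1 : ∀ i, 1 ≤ i → i < r → s i * s i = 1)
    (h2 : ∀ i j, 1 ≤ i → i < r → 1 ≤ j → j < r → (i + 1 < j ∨ j + 1 < i) →
      s i * s j = s j * s i)
    (h3 : ∀ i, 1 ≤ i → i + 1 < r → s i * s (i + 1) * s i = s (i + 1) * s i * s (i + 1))
    (h4 : ∀ i, 2 ≤ i → i < r → s i * e = e * s i)
    (h5 : e * s 1 * e = e)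
    (h6 : e * e = δ • e)
    (h7 : ∀ i j, 1 ≤ i → i < r → 1 ≤ j → j < t → s i * sb j = sb j * s i)
    (h8 : ∀ i, 1 ≤ i → i < t → sb i * sb i = 1)
    (h9 : ∀ i j, 1 ≤ i → i < t → 1 ≤ j → j < t → (i + 1 < j ∨ j + 1 < i) →
      sb i * sb j = sb j * sb i)
    (h10 : ∀ i, 1 ≤ i → i + 1 < t → sb i * sb (i + 1) * sb i = sb (i + 1) * sb i * sb (i + 1))
    (h11 : ∀ i, 2 ≤ i → i < t → sb i * e = e * sb i)
    (h12 : e * sb 1 * e = e)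
    (h13 : e * s 1 * sb 1 * e * s 1 = e * s 1 * sb 1 * e * sb 1)
    (h14 : s 1 * e * s 1 * sb 1 * e = sb 1 * e * s 1 * sb 1 * e) (δ1 : R) :
    let y := fun i => algebraMap R A δ1 + (∑ j ∈ Finset.Ico 1 i, eElt s sb e i j) - jmElt s i
    ∀ i, 1 ≤ i → i < min r t → y i * y (i + 1) = y (i + 1) * y i :=
  walledBrauer_y_commute_general R A r t s sb e h1 h2 h3 h4 h5 h7 h8 h9 h10 h11 h13 h14 δ1
end

section
/- Let B^aff_{r,t} be the affine walled Brauer algebra and suppose e_1 is torsion-free over R[ω_2, ω_3, ..., ω̄_0, ω̄_1, ...]. Then ω̄_0 = ω_0, ω̄_1 = −ω_1, and for each k ≥ 2, ω̄_k lies in the subring R[ω_2, ..., ω_k] generated by ω_2,...,ω_k. -/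
/-!
Using `e₁(x₁ + x̄₁) = 0 = (x₁ + x̄₁)e₁` and `x₁(e₁ + x̄₁) = (e₁ + x̄₁)x₁`, one obtains
`e₁x̄₁^(m+1) = ω̄₀ e₁x̄₁^m - e₁x̄₁^m x₁ - ω̄_m e₁`, so by induction `e₁x̄₁^k` lies in the left
span of `e₁, e₁x₁, …, e₁x₁^k` with coefficients in any subalgebra containing `ω̄₀, …, ω̄_{k-1}`.
Multiplying on the right by `e₁` and using `e₁x₁^i e₁ = ω_i e₁` gives `ω̄_k e₁ = z e₁` with `z` in
`R[ω₂, …, ω_k]` (once `ω̄_m` is known to lie in `R[ω₂, …, ω_m]` for `m < k`), and torsion-freeness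
of `e₁` yields `ω̄_k = z`.
-/

namespace AffineWalledBrauer

open Submodule

section Recursion

variable {A : Type*} [Ring A] {e x xb : A} {omb : ℕ → A}

theorem e_mul_eq_neg_of_mul_add_eq_zero (he : e * (x + xb) = 0) : e * xb = -(e * x) :=
  eq_neg_of_add_eq_zero_right (by rwa [← mul_add])

theorem e_mul_x_mul_xb_pow (he : e * (x + xb) = 0) (hxe : (x + xb) * e = 0)
    (hxxb : x * (e + xb) = (e + xb) * x) (homb : ∀ k, e * xb ^ k * e = omb k * e) (m : ℕ) :
    e * x * xb ^ m = e * xb ^ m * x - omb 0 * (e * xb ^ m) + omb m * e := by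
  have hexb := e_mul_eq_neg_of_mul_add_eq_zero he
  have hxe' : x * e = -(xb * e) := eq_neg_of_add_eq_zero_left (by rwa [← add_mul])
  have hcomm : x * xb = xb * x + e * x - x * e := by
    rw [mul_add, add_mul] at hxxb
    rw [eq_sub_iff_add_eq, add_comm (x * xb), hxxb, add_comm]
  induction m with
  | zero => simp only [pow_zero, mul_one]; abel
  | succ m ih =>
    have hstep : e * xb ^ m * x * xb
        = e * xb ^ (m + 1) * x + omb m * (e * x) + omb (m + 1) * e := by
      have hxbx : e * xb ^ m * (xb * x) = e * xb ^ (m + 1) * x := by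
        rw [pow_succ, ← mul_assoc, ← mul_assoc]
      have hex : e * xb ^ m * (e * x) = omb m * (e * x) := by
        rw [← mul_assoc, homb m, mul_assoc]
      have hxe'' : e * xb ^ m * (x * e) = -(omb (m + 1) * e) := by
        rw [hxe', mul_neg, ← mul_assoc, mul_assoc e, ← pow_succ, homb (m + 1)]
      calc e * xb ^ m * x * xb = e * xb ^ m * (x * xb) := mul_assoc _ _ _
        _ = e * xb ^ m * (xb * x) + e * xb ^ m * (e * x) - e * xb ^ m * (x * e) := by
            rw [hcomm, mul_sub, mul_add]
        _ = e * xb ^ (m + 1) * x + omb m * (e * x) + omb (m + 1) * e := by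
            rw [hxbx, hex, hxe'']; abel
    rw [pow_succ, ← mul_assoc, ih, add_mul, sub_mul, hstep, mul_assoc (omb 0),
      mul_assoc (omb m), mul_assoc e (xb ^ m), ← pow_succ, hexb, mul_neg]
    abel

theorem e_mul_xb_pow_succ (he : e * (x + xb) = 0) (hxe : (x + xb) * e = 0)
    (hxxb : x * (e + xb) = (e + xb) * x) (homb : ∀ k, e * xb ^ k * e = omb k * e) (m : ℕ) :
    e * xb ^ (m + 1) = omb 0 * (e * xb ^ m) - e * xb ^ m * x - omb m * e := by
  rw [pow_succ', ← mul_assoc, e_mul_eq_neg_of_mul_add_eq_zero he, neg_mul,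
    e_mul_x_mul_xb_pow he hxe hxxb homb]
  abel

end Recursion

section Span

variable {R A : Type*} [CommRing R] [Ring A] [Algebra R A] {T : Subalgebra R A} {e x : A}

theorem mul_mem_span_succ {k : ℕ} {y : A} (hy : y ∈ span T ((e * x ^ ·) '' Set.Iic k)) :
    y * x ∈ span T ((e * x ^ ·) '' Set.Iic (k + 1)) := by
  induction hy using Submodule.span_induction with
  | mem _ hy =>
    obtain ⟨i, hi, rfl⟩ := hy
    rw [mul_assoc, ← pow_succ]
    exact subset_span ⟨i + 1, Nat.succ_le_succ hi, rfl⟩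
  | zero => rw [zero_mul]; exact zero_mem _
  | add _ _ _ _ hy hz => rw [add_mul]; exact add_mem hy hz
  | smul c _ _ hy => rw [Subalgebra.smul_def, smul_eq_mul, mul_assoc]; exact smul_mem _ c hy

theorem e_mul_xb_pow_mem_span {xb : A} {omb : ℕ → A} (he : e * (x + xb) = 0)
    (hxe : (x + xb) * e = 0) (hxxb : x * (e + xb) = (e + xb) * x)
    (homb : ∀ k, e * xb ^ k * e = omb k * e) {k : ℕ} (hT : ∀ m < k, omb m ∈ T) :
    e * xb ^ k ∈ span T ((e * x ^ ·) '' Set.Iic k) := by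
  have he_mem : ∀ n, e ∈ span T ((e * x ^ ·) '' Set.Iic n) := fun n =>
    subset_span ⟨0, Nat.zero_le n, by simp only [pow_zero, mul_one]⟩
  induction k with
  | zero => rw [pow_zero, mul_one]; exact he_mem 0
  | succ m ih =>
    have ih := ih fun n hn => hT n (Nat.lt_succ_of_lt hn)
    have hmono := span_mono (R := T) (Set.image_mono (Set.Iic_subset_Iic.mpr m.le_succ)) ih
    rw [e_mul_xb_pow_succ he hxe hxxb homb]
    refine sub_mem (sub_mem ?_ (mul_mem_span_succ ih)) ?_
    · exact smul_mem _ ⟨omb 0, hT 0 m.succ_pos⟩ hmono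
    · exact smul_mem _ ⟨omb m, hT m m.lt_succ_self⟩ (he_mem _)

theorem exists_mem_mul_eq_of_mem_span {om : ℕ → A} (hom : ∀ k, e * x ^ k * e = om k * e)
    {k : ℕ} (hT : ∀ i ≤ k, om i ∈ T) {y : A} (hy : y ∈ span T ((e * x ^ ·) '' Set.Iic k)) :
    ∃ z ∈ T, y * e = z * e := by
  induction hy using Submodule.span_induction with
  | mem _ hy =>
    obtain ⟨i, hi, rfl⟩ := hy
    exact ⟨om i, hT i hi, hom i⟩
  | zero => exact ⟨0, zero_mem _, by rw [zero_mul]⟩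
  | add _ _ _ _ hy hz =>
    obtain ⟨a, ha, hya⟩ := hy
    obtain ⟨b, hb, hzb⟩ := hz
    exact ⟨a + b, add_mem ha hb, by rw [add_mul, add_mul, hya, hzb]⟩
  | smul c _ _ hy =>
    obtain ⟨a, ha, hya⟩ := hy
    refine ⟨c * a, mul_mem c.2 ha, ?_⟩
    rw [Subalgebra.smul_def, smul_eq_mul, mul_assoc, hya, mul_assoc]

end Span

theorem eq_of_mul_eq_mul_of_torsionFree {R A : Type*} [CommRing R] [Ring A] [Algebra R A]
    {S : Subalgebra R A} {e a b : A} (htf : ∀ z ∈ S, z * e = 0 → z = 0) (ha : a ∈ S)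
    (hb : b ∈ S) (h : a * e = b * e) : a = b :=
  sub_eq_zero.mp (htf _ (sub_mem ha hb) (by rw [sub_mul, h, sub_self]))

theorem mem_adjoin_image_of_le {R A : Type*} [CommRing R] [Ring A] [Algebra R A]
    {om : ℕ → A} {ω0 ω1 : R} (hom0 : om 0 = algebraMap R A ω0)
    (hom1 : om 1 = algebraMap R A ω1) {i k : ℕ} (hik : i ≤ k) :
    om i ∈ Algebra.adjoin R (om '' {i | 2 ≤ i ∧ i ≤ k}) :=
  match i with
  | 0 => hom0 ▸ Subalgebra.algebraMap_mem _ _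
  | 1 => hom1 ▸ Subalgebra.algebraMap_mem _ _
  | n + 2 => Algebra.subset_adjoin ⟨n + 2, ⟨le_add_self, hik⟩, rfl⟩

end AffineWalledBrauer

open AffineWalledBrauer

theorem affineWalledBrauer_omegaBar_general (R : Type*) [CommRing R] (A : Type*) [Ring A] [Algebra R A]
    (ω0 ω1 : R) (e x xb : A) (om omb : ℕ → A)
    (hom0 : om 0 = algebraMap R A ω0) (hom1 : om 1 = algebraMap R A ω1)
    (h6 : e * e = om 0 * e)
    (h8 : e * (x + xb) = 0 ∧ (x + xb) * e = 0)
    (h12 : ∀ k : ℕ, e * x ^ k * e = om k * e)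
    (h21 : x * (e + xb) = (e + xb) * x)
    (h25 : ∀ k : ℕ, e * xb ^ k * e = omb k * e)
    (htf : ∀ z ∈ Algebra.adjoin R (Set.range om ∪ Set.range omb), z * e = 0 → z = 0) :
    omb 0 = om 0 ∧ omb 1 = -om 1 ∧
    ∀ k, 2 ≤ k → omb k ∈ Algebra.adjoin R (om '' {i | 2 ≤ i ∧ i ≤ k}) := by
  set T := fun k => Algebra.adjoin R (om '' {i | 2 ≤ i ∧ i ≤ k})
  have hom_mem : ∀ {i}, om i ∈ Algebra.adjoin R (Set.range om ∪ Set.range omb) :=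
    Algebra.subset_adjoin (Set.mem_union_left _ ⟨_, rfl⟩)
  have homb_mem : ∀ {k}, omb k ∈ Algebra.adjoin R (Set.range om ∪ Set.range omb) :=
    Algebra.subset_adjoin (Set.mem_union_right _ ⟨_, rfl⟩)
  have hT_le : ∀ {k}, T k ≤ Algebra.adjoin R (Set.range om ∪ Set.range omb) := fun {_} =>
    Algebra.adjoin_mono (Set.image_subset_range _ _ |>.trans Set.subset_union_left)
  have hT_mono : ∀ {j k}, j ≤ k → T j ≤ T k := fun hjk =>
    Algebra.adjoin_mono (Set.image_mono fun _ hi => ⟨hi.1, hi.2.trans hjk⟩)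
  have homb_T : ∀ k, omb k ∈ T k := by
    intro k
    induction k using Nat.strong_induction_on with
    | _ k ih =>
      have hspan := e_mul_xb_pow_mem_span (T := T k) h8.1 h8.2 h21 h25
        fun m hm => hT_mono hm.le (ih m hm)
      obtain ⟨z, hz, hze⟩ := exists_mem_mul_eq_of_mem_span h12
        (fun i hi => mem_adjoin_image_of_le hom0 hom1 hi) hspan
      rw [h25] at hze
      rwa [eq_of_mul_eq_mul_of_torsionFree htf homb_mem (hT_le hz) hze]
  refine ⟨?_, ?_, fun k _ => homb_T k⟩
  · refine eq_of_mul_eq_mul_of_torsionFree htf homb_mem hom_mem ?_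
    rw [← h25, pow_zero, mul_one, h6]
  · refine eq_of_mul_eq_mul_of_torsionFree htf homb_mem (neg_mem hom_mem) ?_
    rw [← h25, pow_one, e_mul_eq_neg_of_mul_add_eq_zero h8.1, neg_mul, neg_mul, ← h12,
      pow_one]

/-- In the affine walled Brauer algebra `B^aff_{r,t}` (rendered by its
presentation: any `R`-algebra with elements `e₁, x₁, x̄₁, s_i, s̄_j` and central
families `ω_k, ω̄_k` satisfying the 26 defining relations), if `e₁` is
torsion-free over `R[ω₂, ω₃, …, ω̄₀, ω̄₁, …]`, then `ω̄₀ = ω₀`, `ω̄₁ = −ω₁`, and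
for each `k ≥ 2`, `ω̄_k` lies in the subalgebra `R[ω₂, …, ω_k]`. -/
theorem affineWalledBrauer_omegaBar (R : Type*) [CommRing R] (A : Type*) [Ring A] [Algebra R A]
    (r t : ℕ) (ω0 ω1 : R) (s sb : ℕ → A) (e x xb : A) (om omb : ℕ → A)
    (hom0 : om 0 = algebraMap R A ω0) (hom1 : om 1 = algebraMap R A ω1)
    (hcom : ∀ k, Commute (om k) e ∧ Commute (om k) x ∧ Commute (om k) xb ∧
      (∀ i, Commute (om k) (s i)) ∧ (∀ j, Commute (om k) (sb j)) ∧
      (∀ l, Commute (om k) (om l)) ∧ (∀ l, Commute (om k) (omb l)))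
    (hcomb : ∀ k, Commute (omb k) e ∧ Commute (omb k) x ∧ Commute (omb k) xb ∧
      (∀ i, Commute (omb k) (s i)) ∧ (∀ j, Commute (omb k) (sb j)) ∧
      (∀ l, Commute (omb k) (omb l)))
    (h1 : ∀ i, 1 ≤ i → i < r → s i * s i = 1)
    (h2 : ∀ i j, 1 ≤ i → i < r → 1 ≤ j → j < r → (i + 1 < j ∨ j + 1 < i) →
      s i * s j = s j * s i)
    (h3 : ∀ i, 1 ≤ i → i + 1 < r → s i * s (i + 1) * s i = s (i + 1) * s i * s (i + 1))
    (h4 : ∀ i, 2 ≤ i → i < r → s i * e = e * s i)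
    (h5 : e * s 1 * e = e)
    (h6 : e * e = om 0 * e)
    (h7 : ∀ i j, 1 ≤ i → i < r → 1 ≤ j → j < t → s i * sb j = sb j * s i)
    (h8 : e * (x + xb) = 0 ∧ (x + xb) * e = 0)
    (h9 : e * (s 1 * x * s 1) = (s 1 * x * s 1) * e)
    (h10 : ∀ i, 2 ≤ i → i < r → s i * x = x * s i)
    (h11 : ∀ i, 1 ≤ i → i < r → s i * xb = xb * s i)
    (h12 : ∀ k : ℕ, e * x ^ k * e = om k * e)
    (h13 : x * (s 1 * x * s 1 - s 1) = (s 1 * x * s 1 - s 1) * x)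
    (h14 : ∀ i, 1 ≤ i → i < t → sb i * sb i = 1)
    (h15 : ∀ i j, 1 ≤ i → i < t → 1 ≤ j → j < t → (i + 1 < j ∨ j + 1 < i) →
      sb i * sb j = sb j * sb i)
    (h16 : ∀ i, 1 ≤ i → i + 1 < t → sb i * sb (i + 1) * sb i = sb (i + 1) * sb i * sb (i + 1))
    (h17 : ∀ i, 2 ≤ i → i < t → sb i * e = e * sb i)
    (h18 : e * sb 1 * e = e)
    (h19 : e * s 1 * sb 1 * e * s 1 = e * s 1 * sb 1 * e * sb 1)
    (h20 : s 1 * e * s 1 * sb 1 * e = sb 1 * e * s 1 * sb 1 * e)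
    (h21 : x * (e + xb) = (e + xb) * x)
    (h22 : e * (sb 1 * xb * sb 1) = (sb 1 * xb * sb 1) * e)
    (h23 : ∀ i, 2 ≤ i → i < t → sb i * xb = xb * sb i)
    (h24 : ∀ i, 1 ≤ i → i < t → sb i * x = x * sb i)
    (h25 : ∀ k : ℕ, e * xb ^ k * e = omb k * e)
    (h26 : xb * (sb 1 * xb * sb 1 - sb 1) = (sb 1 * xb * sb 1 - sb 1) * xb)
    (htf : ∀ z ∈ Algebra.adjoin R (Set.range om ∪ Set.range omb), z * e = 0 → z = 0) :
    omb 0 = om 0 ∧ omb 1 = -om 1 ∧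
    ∀ k, 2 ≤ k → omb k ∈ Algebra.adjoin R (om '' {i | 2 ≤ i ∧ i ≤ k}) :=
  affineWalledBrauer_omegaBar_general R A ω0 ω1 e x xb om omb hom0 hom1 h6 h8 h12 h21 h25 htf
end
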